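/- arXiv:1412.8691 — 5 statements merged into one kernel-verified Lean document; each statement's English description precedes it below -/
import Mathlib

section
/- If a connected framed 4-valent graph admits a source-sink structure, then it admits exactly two such structures, and they differ by reversing the orientation of every edge. -/
open Relation

/-- A framed 4-valent graph, encoded by its darts (half-edges).
`vtx` sends each dart to its vertex, `e` is the fixed-point-free involution
pairing the two darts of each edge, and `opp` is the fixed-point-free
involution (the framing) pairing opposite darts at each vertex.
Every vertex carries exactly four darts, split into two opposite pairs. -/
structure FGraph where
  V : Type
  D : Type
  vtx : D → V
  e : D → D
  opp : D → D
  e_invol : ∀ d, e (e d) = d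
  e_ne : ∀ d, e d ≠ d
  opp_invol : ∀ d, opp (opp d) = d
  opp_ne : ∀ d, opp d ≠ d
  vtx_opp : ∀ d, vtx (opp d) = vtx d
  four_valent : ∀ v : V, ∃ d d', vtx d = v ∧ vtx d' = v ∧ d' ≠ d ∧ d' ≠ opp d ∧
      ∀ x, vtx x = v → x = d ∨ x = opp d ∨ x = d' ∨ x = opp d'

namespace FGraph

/-- A source-sink structure: an orientation of the edges (recorded on darts:
`o d = true` iff the edge of `d` is oriented away from the vertex of `d`)
such that at every vertex one opposite pair of darts is outgoing and the
other opposite pair is incoming. -/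
def IsSourceSink (Γ : FGraph) (o : Γ.D → Bool) : Prop :=
  (∀ d, o (Γ.e d) = !o d) ∧ (∀ d, o (Γ.opp d) = o d) ∧
  (∀ d d', Γ.vtx d' = Γ.vtx d → d' ≠ d → d' ≠ Γ.opp d → o d' = !o d)

/-- Connectedness: any two darts are joined by a chain of edges and vertices. -/
def Connected (Γ : FGraph) : Prop :=
  ∀ d d' : Γ.D, ReflTransGen (fun x y => y = Γ.e x ∨ Γ.vtx y = Γ.vtx x) d d'

end FGraph

namespace FGraph

variable {Γ : FGraph} {o o' : Γ.D → Bool}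

theorem IsSourceSink.not (ho : Γ.IsSourceSink o) : Γ.IsSourceSink (fun d => !o d) := by
  obtain ⟨he, hopp, hvtx⟩ := ho
  exact ⟨fun d => by simp [he d], fun d => by simp [hopp d],
    fun d d' hv hd hopp' => by simp [hvtx d d' hv hd hopp']⟩

/-- The three local rules relate the values at adjacent darts in a way that does not depend
on the structure, so the pointwise difference of two source-sink structures is locally
constant. -/
theorem IsSourceSink.xor_eq_of_adj (ho : Γ.IsSourceSink o) (ho' : Γ.IsSourceSink o')
    {x y : Γ.D} (hxy : y = Γ.e x ∨ Γ.vtx y = Γ.vtx x) :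
    xor (o y) (o' y) = xor (o x) (o' x) := by
  obtain ⟨he, hopp, hvtx⟩ := ho
  obtain ⟨he', hopp', hvtx'⟩ := ho'
  rcases hxy with rfl | hv
  · rw [he, he']
    cases o x <;> cases o' x <;> rfl
  · by_cases hyx : y = x
    · rw [hyx]
    by_cases hyopp : y = Γ.opp x
    · rw [hyopp, hopp, hopp']
    · rw [hvtx x y hv hyx hyopp, hvtx' x y hv hyx hyopp]
      cases o x <;> cases o' x <;> rfl

theorem Connected.apply_eq_of_forall_adj {β : Type*} (hconn : Γ.Connected) {f : Γ.D → β}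
    (hf : ∀ x y, y = Γ.e x ∨ Γ.vtx y = Γ.vtx x → f y = f x) (d d' : Γ.D) : f d' = f d := by
  induction hconn d d' with
  | refl => rfl
  | tail _ hadj ih => exact (hf _ _ hadj).trans ih

theorem IsSourceSink.eq_or_eq_not [Nonempty Γ.D] (hconn : Γ.Connected)
    (ho : Γ.IsSourceSink o) (ho' : Γ.IsSourceSink o') : o' = o ∨ o' = fun d => !o d := by
  obtain ⟨d⟩ := ‹Nonempty Γ.D›
  have hdiff (x : Γ.D) : o' x = xor (o x) (xor (o d) (o' d)) := by
    rw [← hconn.apply_eq_of_forall_adj (fun _ _ => ho.xor_eq_of_adj ho') d x]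
    simp
  cases hd : xor (o d) (o' d)
  · exact .inl (funext fun x => by simpa [hd] using hdiff x)
  · exact .inr (funext fun x => by simpa [hd] using hdiff x)

end FGraph

/-- A connected framed 4-valent graph admitting a source-sink
structure admits exactly two of them, differing by reversing every edge. -/
theorem stmt_0 (Γ : FGraph) [Nonempty Γ.D] (hconn : Γ.Connected)
    (o : Γ.D → Bool) (ho : Γ.IsSourceSink o) :
    Γ.IsSourceSink (fun d => !o d) ∧ (fun d => !o d) ≠ o ∧
      ∀ o' : Γ.D → Bool, Γ.IsSourceSink o' → o' = o ∨ o' = fun d => !o d := by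
  refine ⟨ho.not, fun h => ?_, fun _ ho' => ho.eq_or_eq_not hconn ho'⟩
  obtain ⟨d⟩ := ‹Nonempty Γ.D›
  simpa using congrFun h d
end

section
/- Smoothing a framed 4-graph at a vertex preserves the existence of a source-sink structure: if the graph admits a source-sink structure, then any graph obtained by smoothing at a vertex (deleting the vertex and reconnecting the four half-edges into two edges in a way compatible with the framing) also admits a source-sink structure. -/
open Relation

namespace FGraph

variable (Γ : FGraph)

/-- One step of travelling through the smoothed vertex: if the other end of the
current edge is a dart at the smoothed vertex (`bad`), continue to the dart it
is re-paired with by the smoothing. -/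
def SmoothStep (bad : Γ.D → Prop) (pair : Γ.D → Γ.D) (x y : Γ.D) : Prop :=
  bad (Γ.e x) ∧ y = pair (Γ.e x)

/-- `Exits Γ bad pair x y` : starting on dart `x` and passing through the
smoothed vertex as often as needed, the strand emerges at the dart `y`
(not at the smoothed vertex); `x—y` is an edge of the smoothed graph. -/
def Exits (bad : Γ.D → Prop) (pair : Γ.D → Γ.D) (x y : Γ.D) : Prop :=
  ∃ z, Relation.ReflTransGen (Γ.SmoothStep bad pair) x z ∧ ¬ bad (Γ.e z) ∧ y = Γ.e z

/-- `Γ'` is obtained from `Γ` by a smoothing at the vertex `v`: the vertex is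
deleted and its four darts are re-paired into two new connections, each dart
being paired with an adjacent (non-opposite) dart; darts whose strand gets
trapped in a circular component may disappear. -/
structure SmoothingAt (v : Γ.V) (Γ' : FGraph) where
  pair : Γ.D → Γ.D
  φ : Γ'.D → Γ.D
  pair_vtx : ∀ x, Γ.vtx x = v → Γ.vtx (pair x) = v
  pair_invol : ∀ x, Γ.vtx x = v → pair (pair x) = x
  pair_ne : ∀ x, Γ.vtx x = v → pair x ≠ x
  pair_adj : ∀ x, Γ.vtx x = v → pair x ≠ Γ.opp x
  φ_inj : Function.Injective φ
  φ_avoids : ∀ y, Γ.vtx (φ y) ≠ v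
  φ_onto : ∀ x, Γ.vtx x ≠ v →
      (∃ y, φ y = x) ∨ ¬ ∃ z, Γ.Exits (fun u => Γ.vtx u = v) pair x z
  φ_vtx : ∀ y y', Γ'.vtx y' = Γ'.vtx y ↔ Γ.vtx (φ y') = Γ.vtx (φ y)
  φ_opp : ∀ y, φ (Γ'.opp y) = Γ.opp (φ y)
  φ_e : ∀ y, Γ.Exits (fun u => Γ.vtx u = v) pair (φ y) (φ (Γ'.e y))

end FGraph

/-!
A source-sink structure alternates around each vertex, so the two ends of a re-paired adjacent
pair at the smoothed vertex carry opposite values, and so do the two ends of every edge. Hence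
the value of the orientation is constant along a strand passing through the smoothed vertex,
and restricting it to the surviving darts orients every new edge consistently.
-/

namespace FGraph

variable {Γ : FGraph} {o : Γ.D → Bool} {v : Γ.V} {pair : Γ.D → Γ.D}

theorem IsSourceSink.eq_of_smoothStep (ho : Γ.IsSourceSink o)
    (pair_vtx : ∀ x, Γ.vtx x = v → Γ.vtx (pair x) = v)
    (pair_ne : ∀ x, Γ.vtx x = v → pair x ≠ x)
    (pair_adj : ∀ x, Γ.vtx x = v → pair x ≠ Γ.opp x) {x y : Γ.D}
    (hxy : Γ.SmoothStep (fun u => Γ.vtx u = v) pair x y) : o y = o x := by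
  obtain ⟨hv, rfl⟩ := hxy
  have hflip : o (pair (Γ.e x)) = !o (Γ.e x) :=
    ho.2.2 _ _ ((pair_vtx _ hv).trans hv.symm) (pair_ne _ hv) (pair_adj _ hv)
  rw [hflip, ho.1, Bool.not_not]

theorem IsSourceSink.eq_not_of_exits (ho : Γ.IsSourceSink o)
    (pair_vtx : ∀ x, Γ.vtx x = v → Γ.vtx (pair x) = v)
    (pair_ne : ∀ x, Γ.vtx x = v → pair x ≠ x)
    (pair_adj : ∀ x, Γ.vtx x = v → pair x ≠ Γ.opp x) {x y : Γ.D}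
    (hxy : Γ.Exits (fun u => Γ.vtx u = v) pair x y) : o y = !o x := by
  obtain ⟨z, hxz, -, rfl⟩ := hxy
  have hz : o z = o x := by
    induction hxz with
    | refl => rfl
    | tail _ hstep ih => rw [ho.eq_of_smoothStep pair_vtx pair_ne pair_adj hstep, ih]
  rw [ho.1, hz]

theorem SmoothingAt.isSourceSink_comp {Γ' : FGraph} (sm : Γ.SmoothingAt v Γ')
    (ho : Γ.IsSourceSink o) : Γ'.IsSourceSink (o ∘ sm.φ) := by
  refine ⟨fun d => ?_, fun d => ?_, fun d d' hv hne hno => ?_⟩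
  · exact ho.eq_not_of_exits sm.pair_vtx sm.pair_ne sm.pair_adj (sm.φ_e d)
  · simp only [Function.comp_apply, sm.φ_opp, ho.2.1]
  · refine ho.2.2 _ _ ((sm.φ_vtx d d').mp hv) (fun h => hne (sm.φ_inj h))
      fun h => hno ?_
    exact sm.φ_inj (by rw [sm.φ_opp, h])

end FGraph

/-- Smoothing at a vertex preserves the existence of a
source-sink structure. -/
theorem stmt_2 (Γ : FGraph) (v : Γ.V) (Γ' : FGraph)
    (hsm : Nonempty (Γ.SmoothingAt v Γ'))
    (h : ∃ o, Γ.IsSourceSink o) :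
    ∃ o', Γ'.IsSourceSink o' := by
  obtain ⟨sm⟩ := hsm
  obtain ⟨o, ho⟩ := h
  exact ⟨o ∘ sm.φ, sm.isSourceSink_comp ho⟩
end

section
/- If a framed 4-graph admits a checkerboard cellular embedding into some closed oriented surface, then it admits a source-sink structure. -/
open Relation

namespace FGraph

/-- A rotation system on a framed 4-graph: a cyclic ordering of the darts at
each vertex in which opposite darts interleave. Rotation systems correspond
exactly to cellular embeddings into closed oriented surfaces compatible with
the framing. -/
structure Rotation (Γ : FGraph) where
  ρ : Γ.D → Γ.D
  vtx_ρ : ∀ d, Γ.vtx (ρ d) = Γ.vtx d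
  ρρ : ∀ d, ρ (ρ d) = Γ.opp d
  ρ_ne : ∀ d, ρ d ≠ d
  ρ_ne_opp : ∀ d, ρ d ≠ Γ.opp d

/-- The faces of the embedding determined by a rotation system are the orbits
of `d ↦ ρ (e d)`; the embedding is checkerboard if the faces can be 2-colored
(a color function constant along each face boundary walk) so that the two
faces on the two sides of each edge get different colors. -/
def Checkerboard (Γ : FGraph) (r : Γ.Rotation) : Prop :=
  ∃ col : Γ.D → Bool, (∀ d, col (r.ρ (Γ.e d)) = col d) ∧ ∀ d, col (Γ.e d) = !col d

end FGraph

/-! The face colouring of a checkerboard embedding, read on darts, is itself a source-sink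
orientation. It flips across every edge by the checkerboard condition. Since `ρ d` lies on the
face of `e d`, it also flips under the rotation, hence is preserved by `opp = ρ²`. Finally the
two darts at a vertex that are not opposite to or equal to `d` are `ρ d` and `opp (ρ d)`,
so they carry the colour opposite to that of `d`. -/

namespace FGraph

variable {Γ : FGraph}

theorem eq_or_eq_opp_of_vtx_eq {d d₁ d₂ : Γ.D} (h₁ : Γ.vtx d₁ = Γ.vtx d)
    (h₂ : Γ.vtx d₂ = Γ.vtx d) (hd₁ : d₁ ≠ d) (hd₁' : d₁ ≠ Γ.opp d) (hd₂ : d₂ ≠ d)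
    (hd₂' : d₂ ≠ Γ.opp d) : d₂ = d₁ ∨ d₂ = Γ.opp d₁ := by
  obtain ⟨a, a', -, -, -, -, hall⟩ := Γ.four_valent (Γ.vtx d)
  have := Γ.opp_invol
  rcases hall d rfl with rfl | rfl | rfl | rfl <;>
    rcases hall d₁ h₁ with rfl | rfl | rfl | rfl <;>
    rcases hall d₂ h₂ with rfl | rfl | rfl | rfl <;>
    simp_all

theorem Rotation.eq_rho_or_eq_opp_rho (r : Γ.Rotation) {d d' : Γ.D} (hv : Γ.vtx d' = Γ.vtx d)
    (hne : d' ≠ d) (hne' : d' ≠ Γ.opp d) : d' = r.ρ d ∨ d' = Γ.opp (r.ρ d) :=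
  eq_or_eq_opp_of_vtx_eq (r.vtx_ρ d) hv (r.ρ_ne d) (r.ρ_ne_opp d) hne hne'

section FaceColoring

variable (r : Γ.Rotation) {col : Γ.D → Bool}

theorem color_rho (hface : ∀ d, col (r.ρ (Γ.e d)) = col d) (hedge : ∀ d, col (Γ.e d) = !col d)
    (d : Γ.D) : col (r.ρ d) = !col d := by
  rw [← hedge, ← hface (Γ.e d), Γ.e_invol]

theorem color_opp (hface : ∀ d, col (r.ρ (Γ.e d)) = col d) (hedge : ∀ d, col (Γ.e d) = !col d)
    (d : Γ.D) : col (Γ.opp d) = col d := by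
  rw [← r.ρρ, color_rho r hface hedge, color_rho r hface hedge, Bool.not_not]

theorem isSourceSink_of_face_coloring (hface : ∀ d, col (r.ρ (Γ.e d)) = col d)
    (hedge : ∀ d, col (Γ.e d) = !col d) : Γ.IsSourceSink col := by
  refine ⟨hedge, color_opp r hface hedge, fun d d' hv hne hne' => ?_⟩
  rcases r.eq_rho_or_eq_opp_rho hv hne hne' with rfl | rfl
  · exact color_rho r hface hedge d
  · rw [color_opp r hface hedge, color_rho r hface hedge]

end FaceColoring

end FGraph

/-- If a framed 4-graph admits a checkerboard cellular
embedding into some closed oriented surface (i.e. a rotation system whose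
face 2-coloring is checkerboard), then it admits a source-sink structure. -/
theorem stmt_3 (Γ : FGraph) (h : ∃ r : Γ.Rotation, Γ.Checkerboard r) :
    ∃ o, Γ.IsSourceSink o := by
  obtain ⟨r, col, hface, hedge⟩ := h
  exact ⟨col, FGraph.isSourceSink_of_face_coloring r hface hedge⟩
end

section
/- If a framed 4-graph admits a source-sink structure, then every cellular embedding of it into any closed oriented surface (compatible with the framing) is checkerboard colorable. -/
open Relation

namespace FGraph

variable {Γ : FGraph} {o : Γ.D → Bool}

theorem IsSourceSink.apply_ρ (ho : Γ.IsSourceSink o) (r : Γ.Rotation) (d : Γ.D) :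
    o (r.ρ d) = !o d :=
  ho.2.2 d (r.ρ d) (r.vtx_ρ d) (r.ρ_ne d) (r.ρ_ne_opp d)

/-- Both `e` and `ρ` reverse the orientation, so every face walk `ρ ∘ e` preserves it. -/
theorem IsSourceSink.apply_ρ_e (ho : Γ.IsSourceSink o) (r : Γ.Rotation) (d : Γ.D) :
    o (r.ρ (Γ.e d)) = o d := by
  rw [ho.apply_ρ, ho.1, Bool.not_not]

theorem IsSourceSink.checkerboard (ho : Γ.IsSourceSink o) (r : Γ.Rotation) :
    Γ.Checkerboard r :=
  ⟨o, ho.apply_ρ_e r, ho.1⟩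

end FGraph

/-- If a framed 4-graph admits a source-sink structure, then
every cellular embedding of it into a closed oriented surface compatible with
the framing (i.e. every rotation system) is checkerboard colorable. -/
theorem stmt_4 (Γ : FGraph) (h : ∃ o, Γ.IsSourceSink o) :
    ∀ r : Γ.Rotation, Γ.Checkerboard r := by
  obtain ⟨o, ho⟩ := h
  exact ho.checkerboard
end

section
/- For every group G and every nontrivial element g ∈ G, labeling the unique vertex of the one-vertex framed 4-graph F₁ (the 'figure-eight' curve whose vertex smoothing along the orientation yields two components) by g gives a G-knot not equivalent to the unknot. -/
open Relation

/-! ## Framed 4-graphs (dart model with a rotation)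

A framed 4-valent graph is encoded by its darts: `e` is the fixed-point-free
involution pairing the two darts of each edge, `σ` is a permutation of order 4
rotating the darts around each vertex (vertices are the `σ`-orbits, which
have exactly 4 elements); the framing pairs `d` with the opposite dart
`σ (σ d)`.  The field `circles` records the number of circular
(vertex-free) components. -/
structure FrGraph where
  D : Type
  circles : ℕ
  e : D → D
  σ : D → D
  e_invol : ∀ d, e (e d) = d
  e_ne : ∀ d, e d ≠ d
  σ4 : ∀ d, σ (σ (σ (σ d))) = d
  σ_ne : ∀ d, σ d ≠ d
  σ2_ne : ∀ d, σ (σ d) ≠ d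

namespace FrGraph

/-- Two darts lie on the same unicursal component iff they are related by the
equivalence generated by: same edge, or opposite darts at a vertex. -/
def uniStep (Γ : FrGraph) (x y : Γ.D) : Prop := y = Γ.e x ∨ y = Γ.σ (Γ.σ x)

def UniRel (Γ : FrGraph) : Γ.D → Γ.D → Prop := EqvGen Γ.uniStep

/-- The number of components: unicursal components plus circular components. -/
noncomputable def components (Γ : FrGraph) : ℕ := Nat.card (Quot Γ.uniStep) + Γ.circles

def OneComp (Γ : FrGraph) : Prop := Γ.components = 1
def TwoComp (Γ : FrGraph) : Prop := Γ.components = 2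

/-- The set of darts at the vertex of `d`. -/
def vtxSet (Γ : FrGraph) (d : Γ.D) : Set Γ.D :=
  {x | x = d ∨ x = Γ.σ d ∨ x = Γ.σ (Γ.σ d) ∨ x = Γ.σ (Γ.σ (Γ.σ d))}

/-- Isomorphism of framed 4-graphs (with rotation). -/
structure FrIso (A B : FrGraph) where
  toFun : A.D → B.D
  bij : Function.Bijective toFun
  map_e : ∀ d, toFun (A.e d) = B.e (toFun d)
  map_σ : ∀ d, toFun (A.σ d) = B.σ (toFun d)
  circles_eq : A.circles = B.circles

/-- Disjoint union of framed 4-graphs. -/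
def disjUnion (A B : FrGraph) : FrGraph where
  D := A.D ⊕ B.D
  circles := A.circles + B.circles
  e := Sum.map A.e B.e
  σ := Sum.map A.σ B.σ
  e_invol := by rintro (d | d) <;> simp [A.e_invol, B.e_invol]
  e_ne := by rintro (d | d) <;> simp [A.e_ne, B.e_ne]
  σ4 := by rintro (d | d) <;> simp [A.σ4, B.σ4]
  σ_ne := by rintro (d | d) <;> simp [A.σ_ne, B.σ_ne]
  σ2_ne := by rintro (d | d) <;> simp [A.σ2_ne, B.σ2_ne]

/-- The circle: a single circular component with no vertices. -/
def unknot : FrGraph where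
  D := Empty
  circles := 1
  e := Empty.elim
  σ := Empty.elim
  e_invol := fun d => d.elim
  e_ne := fun d => d.elim
  σ4 := fun d => d.elim
  σ_ne := fun d => d.elim
  σ2_ne := fun d => d.elim

/-! ### Smoothings -/

/-- A step of travel through the smoothed region: if the far end of the current
edge is a `bad` dart (a dart being deleted), continue via the re-pairing `pass`. -/
def PassStep (Γ : FrGraph) (bad : Γ.D → Prop) (pass : Γ.D → Γ.D) (x y : Γ.D) : Prop :=
  bad (Γ.e x) ∧ y = pass (Γ.e x)

/-- The strand starting at dart `x` eventually emerges at the dart `y` not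
deleted by the smoothing; `x—y` becomes an edge of the smoothed graph. -/
def PassExit (Γ : FrGraph) (bad : Γ.D → Prop) (pass : Γ.D → Γ.D) (x y : Γ.D) : Prop :=
  ∃ z, ReflTransGen (Γ.PassStep bad pass) x z ∧ ¬ bad (Γ.e z) ∧ y = Γ.e z

def NoExit (Γ : FrGraph) (bad : Γ.D → Prop) (pass : Γ.D → Γ.D) (x : Γ.D) : Prop :=
  ¬ ∃ y, Γ.PassExit bad pass x y

/-- The number of new circular components created by the smoothing: classes of
trapped deleted darts. -/
noncomputable def newCircles (Γ : FrGraph) (bad : Γ.D → Prop) (pass : Γ.D → Γ.D) : ℕ :=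
  Nat.card (Quot (fun x y : {d : Γ.D // bad d ∧ Γ.NoExit bad pass d} =>
    y.1 = Γ.e x.1 ∨ y.1 = pass x.1))

/-- `Γ'` is obtained from `Γ` by smoothing simultaneously all vertices whose
darts form the (σ-closed) set `S`: each dart of `S` is re-paired with an
adjacent (non-opposite) dart of the same vertex by the involution `pair`,
the vertices of `S` are deleted and the strands reconnected accordingly;
trapped strands become new circular components. -/
structure SmData (Γ : FrGraph) (S : Set Γ.D) (Γ' : FrGraph) where
  pair : Γ.D → Γ.D
  φ : Γ'.D → Γ.D
  S_σ : ∀ x ∈ S, Γ.σ x ∈ S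
  pair_mem : ∀ x ∈ S, pair x ∈ S
  pair_invol : ∀ x ∈ S, pair (pair x) = x
  pair_adj : ∀ x ∈ S, pair x = Γ.σ x ∨ pair x = Γ.σ (Γ.σ (Γ.σ x))
  φ_inj : Function.Injective φ
  φ_avoids : ∀ y, φ y ∉ S
  φ_onto : ∀ x, x ∉ S → (∃ y, φ y = x) ∨ Γ.NoExit (· ∈ S) pair x
  φ_σ : ∀ y, φ (Γ'.σ y) = Γ.σ (φ y)
  φ_e : ∀ y, Γ.PassExit (· ∈ S) pair (φ y) (φ (Γ'.e y))
  circ : Γ'.circles = Γ.circles + Γ.newCircles (· ∈ S) pair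

/-! ### Bigons -/

/-- A bigon: two distinct edges joining two distinct vertices which are
non-opposite at both endpoints. -/
def HasBigon (A : FrGraph) : Prop :=
  ∃ x y : A.D, A.e x = y ∧
    (A.e (A.σ x) = A.σ y ∨ A.e (A.σ x) = A.σ (A.σ (A.σ y))) ∧
    y ∉ A.vtxSet x

end FrGraph

/-! ## G-labelled oriented framed 4-graphs -/

/-- A `G`-graph: an oriented (source-sink) framed 4-graph whose vertices are
labelled by elements of the group `G`.  `lab d` is the label of the vertex of
`d`; `o d = true` iff the edge of `d` is oriented away from the vertex of `d`,
and the source-sink condition states that along each edge the two darts get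
opposite values, while around a vertex the values alternate. -/
structure GGraph (G : Type) [Group G] extends FrGraph where
  lab : D → G
  o : D → Bool
  lab_σ : ∀ d, lab (σ d) = lab d
  o_e : ∀ d, o (e d) = !o d
  o_σ : ∀ d, o (σ d) = !o d

namespace GGraph

variable {G : Type} [Group G]

/-- Isomorphism of `G`-graphs. -/
structure GIso (A B : GGraph G) where
  toFun : A.D → B.D
  bij : Function.Bijective toFun
  map_e : ∀ d, toFun (A.e d) = B.e (toFun d)
  map_σ : ∀ d, toFun (A.σ d) = B.σ (toFun d)
  map_lab : ∀ d, B.lab (toFun d) = A.lab d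
  map_o : ∀ d, B.o (toFun d) = A.o d
  circles_eq : A.circles = B.circles

/-- Data exhibiting `K'` as obtained from `K` by a **first Reidemeister move**:
a new vertex `n` labelled by the unit of `G`, with a small loop (`n 2 — n 3`,
an adjacent pair), is inserted on the edge of `K` containing the dart `d`. -/
structure R1Data (K K' : GGraph G) where
  φ : K.D → K'.D
  n : Fin 4 → K'.D
  d : K.D
  φ_inj : Function.Injective φ
  n_inj : Function.Injective n
  ran : ∀ y : K'.D, (∃ x, φ x = y) ↔ ∀ i, n i ≠ y
  σ_n : ∀ i, K'.σ (n i) = n (i + 1)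
  lab_n : ∀ i, K'.lab (n i) = 1
  e_pres : ∀ x, x ≠ d → x ≠ K.e d → K'.e (φ x) = φ (K.e x)
  e1 : K'.e (φ d) = n 0
  e2 : K'.e (n 2) = n 3
  e3 : K'.e (n 1) = φ (K.e d)
  σ_pres : ∀ x, K'.σ (φ x) = φ (K.σ x)
  lab_pres : ∀ x, K'.lab (φ x) = K.lab x
  o_pres : ∀ x, K'.o (φ x) = K.o x
  circles_eq : K.circles = K'.circles

/-- Data exhibiting `K'` as obtained from `K` by a **second Reidemeister
move**: two new vertices `u, v`, labelled by mutually inverse elements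
`g, g⁻¹`, are inserted forming a bigon (edges `u 2 — v 0` and `u 3 — v 1`) on
the two strands of `K` containing the darts `a` and `b`. -/
structure R2Data (K K' : GGraph G) where
  φ : K.D → K'.D
  u : Fin 4 → K'.D
  v : Fin 4 → K'.D
  a : K.D
  b : K.D
  g : G
  φ_inj : Function.Injective φ
  u_inj : Function.Injective u
  v_inj : Function.Injective v
  uv_ne : ∀ i j, u i ≠ v j
  ran : ∀ y : K'.D, (∃ x, φ x = y) ↔ ∀ i, u i ≠ y ∧ v i ≠ y
  σ_u : ∀ i, K'.σ (u i) = u (i + 1)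
  σ_v : ∀ i, K'.σ (v i) = v (i + 1)
  lab_u : ∀ i, K'.lab (u i) = g
  lab_v : ∀ i, K'.lab (v i) = g⁻¹
  hba : b ≠ a
  hbea : b ≠ K.e a
  e_pres : ∀ x, x ≠ a → x ≠ K.e a → x ≠ b → x ≠ K.e b → K'.e (φ x) = φ (K.e x)
  ea1 : K'.e (φ a) = u 0
  ea2 : K'.e (u 2) = v 0
  ea3 : K'.e (v 2) = φ (K.e a)
  eb1 : K'.e (φ b) = u 1
  eb2 : K'.e (u 3) = v 1
  eb3 : K'.e (v 3) = φ (K.e b)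
  σ_pres : ∀ x, K'.σ (φ x) = φ (K.σ x)
  lab_pres : ∀ x, K'.lab (φ x) = K.lab x
  o_pres : ∀ x, K'.o (φ x) = K.o x
  circles_eq : K.circles = K'.circles

/-- Data exhibiting `K'` as obtained from `K` by a **third Reidemeister
move**: a triangle formed by three vertices `p, q, r` labelled `a, b, c` with
`a * b * c = 1`, whose cyclic order along the source-sink orientation is
`a, b, c`, is pushed to the other side, the labels being replaced by
`a⁻¹, b⁻¹, c⁻¹`. -/
structure R3Data (K K' : GGraph G) where
  φ : K.D → K'.D
  p : Fin 4 → K.D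
  q : Fin 4 → K.D
  r : Fin 4 → K.D
  p' : Fin 4 → K'.D
  q' : Fin 4 → K'.D
  r' : Fin 4 → K'.D
  a : G
  b : G
  c : G
  φ_bij : Function.Bijective φ
  σ_p : ∀ i, K.σ (p i) = p (i + 1)
  σ_q : ∀ i, K.σ (q i) = q (i + 1)
  σ_r : ∀ i, K.σ (r i) = r (i + 1)
  σ_p' : ∀ i, K'.σ (p' i) = p' (i + 1)
  σ_q' : ∀ i, K'.σ (q' i) = q' (i + 1)
  σ_r' : ∀ i, K'.σ (r' i) = r' (i + 1)
  pq_ne : ∀ i j, p i ≠ q j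
  pr_ne : ∀ i j, p i ≠ r j
  qr_ne : ∀ i j, q i ≠ r j
  φ_p : ∀ i, φ (p i) = p' (i + 2)
  φ_q : ∀ i, φ (q i) = q' (i + 2)
  φ_r : ∀ i, φ (r i) = r' (i + 2)
  tpq : K.e (p 1) = q 0
  tqr : K.e (q 1) = r 0
  trp : K.e (p 0) = r 1
  tpq' : K'.e (p' 3) = q' 2
  tqr' : K'.e (q' 3) = r' 2
  trp' : K'.e (p' 2) = r' 3
  e_pres : ∀ x, x ≠ p 0 → x ≠ p 1 → x ≠ q 0 → x ≠ q 1 → x ≠ r 0 → x ≠ r 1 →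
      K'.e (φ x) = φ (K.e x)
  lab_p : ∀ i, K.lab (p i) = a
  lab_q : ∀ i, K.lab (q i) = b
  lab_r : ∀ i, K.lab (r i) = c
  lab_p' : ∀ i, K'.lab (p' i) = a⁻¹
  lab_q' : ∀ i, K'.lab (q' i) = b⁻¹
  lab_r' : ∀ i, K'.lab (r' i) = c⁻¹
  habc : a * b * c = 1
  ori_p : K.o (p 1) = true
  ori_q : K.o (q 1) = true
  ori_r : K.o (r 1) = true
  lab_pres : ∀ x, (∀ i, x ≠ p i ∧ x ≠ q i ∧ x ≠ r i) → K'.lab (φ x) = K.lab x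
  σ_pres : ∀ x, K'.σ (φ x) = φ (K.σ x)
  o_pres : ∀ x, K'.o (φ x) = K.o x
  circles_eq : K.circles = K'.circles

/-- A single `G`-Reidemeister move (in either direction) or an isomorphism. -/
def GMove (K K' : GGraph G) : Prop :=
  Nonempty (R1Data K K') ∨ Nonempty (R1Data K' K) ∨
  Nonempty (R2Data K K') ∨ Nonempty (R2Data K' K) ∨
  Nonempty (R3Data K K') ∨ Nonempty (R3Data K' K) ∨
  Nonempty (GIso K K')

/-- Equivalence of `G`-graphs: `G`-free links are the equivalence classes. -/
def GEquiv : GGraph G → GGraph G → Prop := ReflTransGen GMove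

/-- Relabelling along a group homomorphism. -/
def mapLabels {H : Type} [Group H] (α : G →* H) (K : GGraph G) : GGraph H where
  toFrGraph := K.toFrGraph
  lab := fun d => α (K.lab d)
  o := K.o
  lab_σ := fun d => congrArg α (K.lab_σ d)
  o_e := K.o_e
  o_σ := K.o_σ

end GGraph

open GGraph

/-- The one-vertex figure-eight diagram `F₁` with its vertex labelled `g`:
one vertex, two loops each joining a pair of adjacent darts, so that the
diagram has one unicursal component, admits a source-sink structure, and its
smoothing along the orientation yields two components. -/
def F₁ {G : Type} [Group G] (g : G) : GGraph G where
  D := Fin 4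
  circles := 0
  e := ![1, 0, 3, 2]
  σ := fun d => d + 1
  e_invol := by decide
  e_ne := by decide
  σ4 := by decide
  σ_ne := by decide
  σ2_ne := by decide
  lab := fun _ => g
  o := ![true, false, true, false]
  lab_σ := fun _ => rfl
  o_e := by decide
  o_σ := by decide

/-! The invariant is the number of darts whose label lies in a set `S ⊆ G` that is closed
under inversion and avoids `1`, counted modulo 8: an R1 move adds darts labelled `1`, an R2
move adds two vertices (8 darts) labelled `a` and `a⁻¹`, which lie in `S` together or not at
all, and an R3 move only inverts labels. For `S = {g, g⁻¹}` it is `4` on `F₁ g` and `0` on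
`F₁ 1`. -/

namespace GGraph

variable {G : Type} [Group G] (S : Set G)

noncomputable def labelCount (K : GGraph G) : ZMod 8 :=
  Nat.card {d : K.D // K.lab d ∈ S}

variable {S}

lemma labelCount_eq_of_injective {K K' : GGraph G} (φ : K.D → K'.D)
    (hφ : Function.Injective φ) (hlab : ∀ x, K'.lab (φ x) ∈ S ↔ K.lab x ∈ S)
    (hran : ∀ y, K'.lab y ∈ S → ∃ x, φ x = y) :
    labelCount S K = labelCount S K' := by
  refine congrArg Nat.cast
    (Nat.card_eq_of_bijective (Subtype.map φ fun x => (hlab x).2) ⟨?_, ?_⟩)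
  · exact fun x y hxy => Subtype.ext (hφ (congrArg Subtype.val hxy))
  · rintro ⟨y, hy⟩
    obtain ⟨x, rfl⟩ := hran y hy
    exact ⟨⟨x, (hlab x).1 hy⟩, rfl⟩

lemma natCast_card_eq_of_bijective_sum {α β : Type} (f : β ⊕ (Fin 4 ⊕ Fin 4) → α)
    (hf : Function.Bijective f) : (Nat.card α : ZMod 8) = Nat.card β := by
  rcases finite_or_infinite β with hβ | hβ
  · rw [← Nat.card_eq_of_bijective f hf, Nat.card_sum, Nat.card_sum]
    simp only [Nat.card_eq_fintype_card, Fintype.card_fin, Nat.cast_add]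
    rw [add_eq_left]
    decide
  · have : Infinite α := Infinite.of_injective _ (hf.1.comp Sum.inl_injective)
    simp only [Nat.card_eq_zero_of_infinite]

lemma labelCount_eq_of_r1 (hS1 : 1 ∉ S) {K K' : GGraph G} (m : R1Data K K') :
    labelCount S K = labelCount S K' := by
  refine labelCount_eq_of_injective m.φ m.φ_inj (fun x => by rw [m.lab_pres]) fun y hy => ?_
  refine (m.ran y).2 fun i hi => hS1 ?_
  rwa [← hi, m.lab_n] at hy

lemma R2Data.φ_ne_u {K K' : GGraph G} (m : R2Data K K') (x : K.D) (i : Fin 4) :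
    m.φ x ≠ m.u i :=
  fun h => ((m.ran _).1 ⟨x, h⟩ i).1 rfl

lemma R2Data.φ_ne_v {K K' : GGraph G} (m : R2Data K K') (x : K.D) (i : Fin 4) :
    m.φ x ≠ m.v i :=
  fun h => ((m.ran _).1 ⟨x, h⟩ i).2 rfl

lemma labelCount_eq_of_r2_of_mem {K K' : GGraph G} (m : R2Data K K') (hg : m.g ∈ S)
    (hg' : m.g⁻¹ ∈ S) : labelCount S K = labelCount S K' := by
  have hlab : ∀ x, K.lab x ∈ S → K'.lab (m.φ x) ∈ S := fun x => by rw [m.lab_pres]; exact id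
  refine (natCast_card_eq_of_bijective_sum
    (Sum.elim (Subtype.map m.φ hlab)
      (Sum.elim (fun i => ⟨m.u i, by rwa [m.lab_u]⟩) fun i => ⟨m.v i, by rwa [m.lab_v]⟩))
    ⟨?_, ?_⟩).symm
  · rintro (x | i | i) (y | j | j) h <;>
      simp only [Sum.elim_inl, Sum.elim_inr, Subtype.map, Subtype.mk.injEq] at h
    · exact congrArg Sum.inl (Subtype.ext (m.φ_inj h))
    · exact absurd h (m.φ_ne_u _ _)
    · exact absurd h (m.φ_ne_v _ _)
    · exact absurd h.symm (m.φ_ne_u _ _)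
    · exact congrArg (Sum.inr ∘ Sum.inl) (m.u_inj h)
    · exact absurd h (m.uv_ne _ _)
    · exact absurd h.symm (m.φ_ne_v _ _)
    · exact absurd h.symm (m.uv_ne _ _)
    · exact congrArg (Sum.inr ∘ Sum.inr) (m.v_inj h)
  · rintro ⟨y, hy⟩
    by_cases hran : ∃ x, m.φ x = y
    · obtain ⟨x, rfl⟩ := hran
      exact ⟨Sum.inl ⟨x, by rwa [m.lab_pres] at hy⟩, rfl⟩
    · obtain ⟨i, rfl | rfl⟩ : ∃ i, m.u i = y ∨ m.v i = y := by
        by_contra! h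
        exact hran ((m.ran y).2 h)
      · exact ⟨Sum.inr (Sum.inl i), rfl⟩
      · exact ⟨Sum.inr (Sum.inr i), rfl⟩

lemma labelCount_eq_of_r2 (hS : ∀ a, a⁻¹ ∈ S ↔ a ∈ S) {K K' : GGraph G} (m : R2Data K K') :
    labelCount S K = labelCount S K' := by
  by_cases hg : m.g ∈ S
  · exact labelCount_eq_of_r2_of_mem m hg ((hS _).2 hg)
  refine labelCount_eq_of_injective m.φ m.φ_inj (fun x => by rw [m.lab_pres])
    fun y hy => (m.ran y).2 fun i => ⟨?_, ?_⟩
  · rintro rfl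
    exact hg (by rwa [m.lab_u] at hy)
  · rintro rfl
    exact hg ((hS _).1 (by rwa [m.lab_v] at hy))

lemma labelCount_eq_of_r3 (hS : ∀ a, a⁻¹ ∈ S ↔ a ∈ S) {K K' : GGraph G} (m : R3Data K K') :
    labelCount S K = labelCount S K' := by
  refine labelCount_eq_of_injective m.φ m.φ_bij.1 (fun x => ?_)
    fun y _ => m.φ_bij.2 y
  by_cases hp : ∃ i, x = m.p i
  · obtain ⟨i, rfl⟩ := hp
    rw [m.φ_p, m.lab_p, m.lab_p', hS]
  by_cases hq : ∃ i, x = m.q i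
  · obtain ⟨i, rfl⟩ := hq
    rw [m.φ_q, m.lab_q, m.lab_q', hS]
  by_cases hr : ∃ i, x = m.r i
  · obtain ⟨i, rfl⟩ := hr
    rw [m.φ_r, m.lab_r, m.lab_r', hS]
  simp only [not_exists] at hp hq hr
  rw [m.lab_pres x fun i => ⟨hp i, hq i, hr i⟩]

lemma labelCount_eq_of_gIso {K K' : GGraph G} (m : GIso K K') :
    labelCount S K = labelCount S K' :=
  labelCount_eq_of_injective m.toFun m.bij.1 (fun x => by rw [m.map_lab])
    fun y _ => m.bij.2 y

lemma labelCount_eq_of_gMove (hS1 : 1 ∉ S) (hS : ∀ a, a⁻¹ ∈ S ↔ a ∈ S) {K K' : GGraph G}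
    (h : GMove K K') : labelCount S K = labelCount S K' := by
  rcases h with ⟨⟨m⟩⟩ | ⟨⟨m⟩⟩ | ⟨⟨m⟩⟩ | ⟨⟨m⟩⟩ | ⟨⟨m⟩⟩ | ⟨⟨m⟩⟩ | ⟨⟨m⟩⟩
  · exact labelCount_eq_of_r1 hS1 m
  · exact (labelCount_eq_of_r1 hS1 m).symm
  · exact labelCount_eq_of_r2 hS m
  · exact (labelCount_eq_of_r2 hS m).symm
  · exact labelCount_eq_of_r3 hS m
  · exact (labelCount_eq_of_r3 hS m).symm
  · exact labelCount_eq_of_gIso m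

lemma labelCount_eq_of_gEquiv (hS1 : 1 ∉ S) (hS : ∀ a, a⁻¹ ∈ S ↔ a ∈ S) {K K' : GGraph G}
    (h : GEquiv K K') : labelCount S K = labelCount S K' := by
  induction h with
  | refl => rfl
  | tail _ hmove ih => exact ih.trans (labelCount_eq_of_gMove hS1 hS hmove)

end GGraph

lemma labelCount_F₁_of_mem {G : Type} [Group G] {S : Set G} {a : G} (ha : a ∈ S) :
    labelCount S (F₁ a) = 4 := by
  have : {d : (F₁ a).D // (F₁ a).lab d ∈ S} ≃ Fin 4 := Equiv.subtypeUnivEquiv fun _ => ha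
  rw [labelCount, Nat.card_congr this, Nat.card_eq_fintype_card, Fintype.card_fin]
  rfl

lemma labelCount_F₁_of_notMem {G : Type} [Group G] {S : Set G} {a : G} (ha : a ∉ S) :
    labelCount S (F₁ a) = 0 := by
  have : IsEmpty {d : (F₁ a).D // (F₁ a).lab d ∈ S} := ⟨fun d => ha d.2⟩
  rw [labelCount, Nat.card_of_isEmpty, Nat.cast_zero]

/-- For every group `G` and every nontrivial `g ∈ G`,
the `G`-knot obtained by labelling the vertex of `F₁` by `g` is not
equivalent to the unknot (the same diagram labelled by the unit, which is
trivialised by the first Reidemeister move). -/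
theorem stmt_12 {G : Type} [Group G] (g : G) (hg : g ≠ 1) :
    ¬ GEquiv (F₁ g) (F₁ (1 : G)) := by
  intro h
  have hS1 : (1 : G) ∉ ({g, g⁻¹} : Set G) := by simpa [eq_comm (a := (1 : G))] using hg
  have hS : ∀ a : G, a⁻¹ ∈ ({g, g⁻¹} : Set G) ↔ a ∈ ({g, g⁻¹} : Set G) := by
    simp [inv_eq_iff_eq_inv, or_comm]
  have hcount := labelCount_eq_of_gEquiv hS1 hS h
  rw [labelCount_F₁_of_mem (Set.mem_insert g _), labelCount_F₁_of_notMem hS1] at hcount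
  exact absurd hcount (by decide)
end
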